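/- arXiv:2007.14872 — 2 statements merged into one kernel-verified Lean document; each statement's English description precedes it below -/
import Mathlib

section
/- The isoresidual fiber over the origin is empty: there is no normalized differential datum (C, z) of type b whose residue vector is identically zero. Equivalently, every meromorphic 1-form C·dw/∏_j (w − z j)^(b j) with C ≠ 0 and the z j pairwise distinct has at least one nonzero residue. -/
/-- The residue vector of the meromorphic 1-form `C · dw / ∏ j (w - z j)^(b j)` on the
Riemann sphere: `λ j` is `2πi` times the classical residue at the pole `z j`. -/
noncomputable def residueVec (p : ℕ) (b : Fin p → ℕ) (C : ℂ) (z : Fin p → ℂ) :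
    Fin p → ℂ := fun j =>
  2 * Real.pi * Complex.I / ((b j - 1).factorial : ℂ) *
    iteratedDeriv (b j - 1)
      (fun w : ℂ => C * ∏ k ∈ Finset.univ.erase j, (w - z k) ^ (-(b k : ℤ))) (z j)

/-- A normalized differential datum of type `b`: the 1-form
`C · dw / ∏ j (w - z j)^(b j)` with `C ≠ 0` and pairwise distinct poles `z j`. -/
structure Datum (p : ℕ) (b : Fin p → ℕ) : Type where
  C : ℂ
  z : Fin p → ℂ
  hC : C ≠ 0
  hz : Function.Injective z

/-- Two data are equivalent when they differ by an affine change of coordinate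
`w ↦ α w + β`, i.e. `z' j = α z j + β` and `C' = C α^(a+1)` with `a = (∑ j, b j) - 2`. -/
def DatumEquiv (p : ℕ) (b : Fin p → ℕ) (d d' : Datum p b) : Prop :=
  ∃ α β : ℂ, α ≠ 0 ∧ (∀ j, d'.z j = α * d.z j + β) ∧
    d'.C = d.C * α ^ ((∑ j, b j) - 2 + 1)

/-- The isoresidual fiber `F(b; λ)`: equivalence classes of normalized differential data
of type `b` whose residue vector is `λ`. -/
def IsoresidualFiber (p : ℕ) (b : Fin p → ℕ) (lam : Fin p → ℂ) : Type :=
  Quot (fun d d' : { d : Datum p b // residueVec p b d.C d.z = lam } =>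
    DatumEquiv p b d.1 d'.1)

section AuxIsoresidual

open Polynomial Finset Topology


private lemma aux_iteratedDeriv_pow_mul {U : Set ℂ} (hU : IsOpen U) {S : ℂ → ℂ}
    (hS : AnalyticOnNhd ℂ S U) {c : ℂ} (hc : c ∈ U) {n m : ℕ} (hn : n < m) :
    iteratedDeriv n (fun w => (w - c) ^ m * S w) c = 0 := by
  induction n generalizing m S with
  | zero =>
    simp only [iteratedDeriv_zero, sub_self]
    rw [zero_pow (by omega), zero_mul]
  | succ n ih =>
    obtain ⟨m, rfl⟩ : ∃ m', m = m' + 1 := ⟨m - 1, by omega⟩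
    rw [iteratedDeriv_succ']
    have hev : deriv (fun w => (w - c) ^ (m + 1) * S w)
        =ᶠ[𝓝 c] fun w => (w - c) ^ m * (((m : ℂ) + 1) * S w + (w - c) * deriv S w) := by
      filter_upwards [hU.mem_nhds hc] with w hw
      have h1 : HasDerivAt (fun w : ℂ => (w - c) ^ (m + 1))
          ((((m : ℂ) + 1) * (w - c) ^ m)) w := by
        simpa using ((hasDerivAt_id w).sub_const c).fun_pow (m + 1)
      have h2 : HasDerivAt S (deriv S w) w := ((hS w hw).differentiableAt).hasDerivAt
      rw [(h1.fun_mul h2).deriv]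
      ring
    rw [hev.iteratedDeriv_eq]
    refine ih (fun w hw => ?_) (by omega)
    exact (analyticAt_const.mul (hS w hw)).add
      (((analyticAt_id.sub analyticAt_const)).mul ((hS.deriv_of_isOpen hU) w hw))

private lemma aux_iteratedDeriv_poly (Q : Polynomial ℂ) (n : ℕ) (x : ℂ) :
    iteratedDeriv n (fun w => Q.eval w) x = (Polynomial.derivative^[n] Q).eval x := by
  induction n generalizing Q with
  | zero => simp
  | succ n ih =>
    rw [iteratedDeriv_succ']
    have hd : deriv (fun w => Q.eval w) = fun w => Q.derivative.eval w :=
      funext fun w => (Q.hasDerivAt w).deriv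
    rw [hd, ih, Function.iterate_succ_apply]

private lemma aux_iterate_derivative_eval (Q : Polynomial ℂ) (k : ℕ) (h : Q.natDegree ≤ k)
    (x : ℂ) :
    (Polynomial.derivative^[k] Q).eval x = (k.factorial : ℂ) * Q.coeff k := by
  have h1 : Polynomial.hasseDeriv k Q = Polynomial.C (Q.coeff k) := by
    ext n
    rw [Polynomial.hasseDeriv_coeff]
    cases n with
    | zero => simp
    | succ n =>
      rw [Polynomial.coeff_C, if_neg (by omega)]
      rw [Polynomial.coeff_eq_zero_of_natDegree_lt (by omega), mul_zero]
  have h2 : Polynomial.derivative^[k] Q = k.factorial • Polynomial.hasseDeriv k Q := by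
    rw [← Polynomial.factorial_smul_hasseDeriv]
    rfl
  rw [h2, h1]
  simp [nsmul_eq_mul, mul_comm]

private lemma aux_partial_fractions {p : ℕ} (hp : 1 ≤ p) (b : Fin p → ℕ) (hb : ∀ j, 1 ≤ b j)
    (z : Fin p → ℂ) (hz : Function.Injective z) (c : ℂ) :
    ∃ A : Fin p → Polynomial ℂ,
      (∀ j, (A j).degree < ((b j : ℕ) : WithBot ℕ)) ∧
      (Polynomial.C c : Polynomial ℂ) =
        ∑ j, A j * ∏ k ∈ Finset.univ.erase j, (X - Polynomial.C (z k)) ^ (b k) := by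
  classical
  set g : Fin p → Polynomial ℂ := fun j => (X - Polynomial.C (z j)) ^ (b j) with hg
  have hmonic : ∀ j, (g j).Monic := fun j => (monic_X_sub_C _).pow _
  have hgne : ∀ j, g j ≠ 0 := fun j => (hmonic j).ne_zero
  have hcop : Set.Pairwise ↑(univ : Finset (Fin p)) fun i j => IsCoprime (g i) (g j) :=
    fun i _ j _ hij => ((Polynomial.pairwise_coprime_X_sub_C hz hij).pow)
  set K := FractionRing (Polynomial ℂ)
  obtain ⟨q, r, hdeg, hident⟩ :=
    div_prod_eq_quo_add_sum_rem_div K (Polynomial.C c) (fun i _ => hmonic i) hcop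
  set φ : Polynomial ℂ →+* K := algebraMap (Polynomial ℂ) K with hφ
  have hinj : Function.Injective φ := IsFractionRing.injective (Polynomial ℂ) K
  have hφne : ∀ P : Polynomial ℂ, P ≠ 0 → φ P ≠ 0 := fun P hP h0 => hP (hinj (by simpa using h0))
  -- turn the identity into a polynomial identity
  have hprod : (∏ i, (φ (g i))) = φ (∏ i, g i) := (map_prod φ _ _).symm
  have hprodne : φ (∏ i, g i) ≠ 0 := hφne _ (prod_ne_zero_iff.mpr fun i _ => hgne i)
  have hident' : φ (Polynomial.C c) = φ q * φ (∏ i, g i) +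
      ∑ i, φ (r i) * φ (∏ k ∈ univ.erase i, g k) := by
    have hident2 : φ (Polynomial.C c) / ∏ i, φ (g i) = φ q + ∑ i, φ (r i) / φ (g i) := hident
    have h1 : (φ (Polynomial.C c)) = (φ q + ∑ i, (φ (r i)) / (φ (g i))) * φ (∏ i, g i) := by
      rw [← hident2, ← hprod]
      rw [div_mul_cancel₀]
      rw [hprod]; exact hprodne
    rw [h1, add_mul, Finset.sum_mul]
    congr 1
    refine Finset.sum_congr rfl fun i _ => ?_
    rw [← Finset.mul_prod_erase univ g (Finset.mem_univ i), map_mul]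
    rw [div_mul_eq_mul_div, mul_comm (φ (g i)), mul_div_assoc, mul_div_assoc,
      div_self (hφne _ (hgne i)), mul_one]
  have hpoly : (Polynomial.C c : Polynomial ℂ) = q * (∏ i, g i) +
      ∑ i, r i * ∏ k ∈ univ.erase i, g k := by
    apply hinj
    rw [hident']
    rw [map_add, map_mul, map_sum]
    congr 1
    refine Finset.sum_congr rfl fun i _ => ?_
    rw [map_mul]
  -- degree bookkeeping : q = 0
  have hdegg : ∀ j, (g j).degree = ((b j : ℕ) : WithBot ℕ) := by
    intro j
    rw [hg]
    simp [degree_pow, degree_X_sub_C]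
  have hB1 : 1 ≤ ∑ j, b j := le_trans (hb ⟨0, hp⟩) (Finset.single_le_sum (fun _ _ => Nat.zero_le _) (mem_univ _))
  have hsumlt : (∑ i, r i * ∏ k ∈ univ.erase i, g k).degree < ((∑ j, b j : ℕ) : WithBot ℕ) := by
    refine lt_of_le_of_lt (Polynomial.degree_sum_le _ _) ?_
    rw [Finset.sup_lt_iff (by exact WithBot.bot_lt_coe _)]
    intro i _
    refine lt_of_le_of_lt (Polynomial.degree_mul_le _ _) ?_
    have h2 : (∏ k ∈ univ.erase i, g k).degree = ((∑ k ∈ univ.erase i, b k : ℕ) : WithBot ℕ) := by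
      rw [Polynomial.degree_prod]
      rw [Finset.sum_congr rfl (fun k _ => hdegg k)]
      exact (Nat.cast_sum _ _).symm
    rw [h2]
    have h3 : ((b i : ℕ) : WithBot ℕ) + ((∑ k ∈ univ.erase i, b k : ℕ) : WithBot ℕ)
        = ((∑ j, b j : ℕ) : WithBot ℕ) := by
      rw [← Nat.cast_add, Finset.add_sum_erase _ _ (mem_univ i)]
    have h4 : (r i).degree < ((b i : ℕ) : WithBot ℕ) := (hdegg i) ▸ hdeg i (mem_univ i)
    exact h3 ▸ WithBot.add_lt_add_right (WithBot.coe_ne_bot) h4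
  have hq : q = 0 := by
    by_contra hq0
    have hlhs : ((∑ j, b j : ℕ) : WithBot ℕ) ≤ (q * ∏ i, g i).degree := by
      rw [Polynomial.degree_mul, Polynomial.degree_prod,
        Finset.sum_congr rfl (fun k _ => hdegg k), ← Nat.cast_sum]
      have h0 : (0 : WithBot ℕ) ≤ q.degree := by
        exact le_trans (le_of_eq rfl) (Polynomial.zero_le_degree_iff.mpr hq0)
      calc ((∑ j, b j : ℕ) : WithBot ℕ) = 0 + ((∑ j, b j : ℕ) : WithBot ℕ) := by rw [zero_add]
        _ ≤ q.degree + ((∑ j, b j : ℕ) : WithBot ℕ) := add_le_add_left h0 _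
    have hrhs : (q * ∏ i, g i).degree < ((∑ j, b j : ℕ) : WithBot ℕ) := by
      have heq : q * ∏ i, g i = Polynomial.C c - ∑ i, r i * ∏ k ∈ univ.erase i, g k := by
        rw [hpoly]; ring
      rw [heq]
      refine lt_of_le_of_lt (Polynomial.degree_sub_le _ _) ?_
      rw [max_lt_iff]
      refine ⟨lt_of_le_of_lt (Polynomial.degree_C_le) ?_, hsumlt⟩
      exact_mod_cast WithBot.coe_lt_coe.mpr hB1
    exact absurd (lt_of_le_of_lt hlhs hrhs) (lt_irrefl _)
  refine ⟨r, fun j => (hdegg j) ▸ hdeg j (mem_univ j), ?_⟩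
  rw [hpoly, hq, zero_mul, zero_add]

private lemma aux_sum_div {p : ℕ} (t v : Fin p → ℂ) (ht : ∀ k, t k ≠ 0) (c : ℂ)
    (h : c = ∑ k, v k * ∏ l ∈ Finset.univ.erase k, t l) :
    ∑ k, v k * (t k)⁻¹ = c * (∏ k, t k)⁻¹ := by
  have hT : (∏ k, t k) ≠ 0 := Finset.prod_ne_zero_iff.mpr fun k _ => ht k
  rw [eq_mul_inv_iff_mul_eq₀ hT, Finset.sum_mul, h]
  refine Finset.sum_congr rfl fun k _ => ?_
  have := ht k
  field_simp
  rw [mul_assoc, Finset.mul_prod_erase univ t (Finset.mem_univ k)]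

private lemma aux_erase_decomp {p : ℕ} (b : Fin p → ℕ) (z : Fin p → ℂ)
    (A : Fin p → Polynomial ℂ) (c : ℂ)
    (hid : (Polynomial.C c : Polynomial ℂ) =
      ∑ k, A k * ∏ l ∈ Finset.univ.erase k, (X - Polynomial.C (z l)) ^ (b l))
    (j : Fin p) (w : ℂ) (hw : ∀ k ∈ Finset.univ.erase j, w ≠ z k) :
    c * ∏ k ∈ Finset.univ.erase j, (w - z k) ^ (-(b k : ℤ)) =
      (A j).eval w + (w - z j) ^ (b j) *
        ∑ k ∈ Finset.univ.erase j, (A k).eval w * ((w - z k) ^ (b k))⁻¹ := by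
  classical
  set t : Fin p → ℂ := fun k => (w - z k) ^ (b k) with hts
  have ht : ∀ k ∈ Finset.univ.erase j, t k ≠ 0 := fun k hk =>
    pow_ne_zero _ (sub_ne_zero.mpr (hw k hk))
  have hT : (∏ k ∈ Finset.univ.erase j, t k) ≠ 0 := Finset.prod_ne_zero_iff.mpr ht
  have hzpow : ∏ k ∈ Finset.univ.erase j, (w - z k) ^ (-(b k : ℤ)) =
      (∏ k ∈ Finset.univ.erase j, t k)⁻¹ := by
    rw [← Finset.prod_inv_distrib]
    refine Finset.prod_congr rfl fun k _ => ?_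
    rw [zpow_neg, zpow_natCast]
  -- evaluate the polynomial identity at w
  have hev : c = ∑ k, (A k).eval w * ∏ l ∈ Finset.univ.erase k, t l := by
    have := congrArg (Polynomial.eval w) hid
    simpa [Polynomial.eval_finset_sum, Polynomial.eval_prod] using this
  rw [hzpow, mul_inv_eq_iff_eq_mul₀ hT]
  symm
  have hkey : ∀ k ∈ Finset.univ.erase j,
      (w - z j) ^ (b j) * ((t k)⁻¹ * ∏ l ∈ Finset.univ.erase j, t l)
        = ∏ l ∈ Finset.univ.erase k, t l := by
    intro k hk
    have hkj : k ≠ j := (Finset.mem_erase.mp hk).1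
    rw [← Finset.mul_prod_erase _ t hk, inv_mul_cancel_left₀ (ht k hk)]
    rw [Finset.erase_right_comm]
    have hjmem : j ∈ Finset.univ.erase k := Finset.mem_erase.mpr ⟨Ne.symm hkj, Finset.mem_univ j⟩
    rw [Finset.mul_prod_erase _ t hjmem]
  calc ((A j).eval w + (w - z j) ^ (b j) *
          ∑ k ∈ Finset.univ.erase j, (A k).eval w * (t k)⁻¹) * ∏ k ∈ Finset.univ.erase j, t k
      = (A j).eval w * ∏ l ∈ Finset.univ.erase j, t l +
        ∑ k ∈ Finset.univ.erase j, (A k).eval w *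
          ((w - z j) ^ (b j) * ((t k)⁻¹ * ∏ l ∈ Finset.univ.erase j, t l)) := by
        rw [add_mul, mul_assoc, Finset.sum_mul]
        congr 1
        rw [Finset.mul_sum]
        refine Finset.sum_congr rfl fun k _ => ?_
        ring
    _ = (A j).eval w * ∏ l ∈ Finset.univ.erase j, t l +
        ∑ k ∈ Finset.univ.erase j, (A k).eval w * ∏ l ∈ Finset.univ.erase k, t l := by
        congr 1
        exact Finset.sum_congr rfl fun k hk => by rw [hkey k hk]
    _ = ∑ k, (A k).eval w * ∏ l ∈ Finset.univ.erase k, t l :=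
        Finset.add_sum_erase _ (fun k => (A k).eval w * ∏ l ∈ Finset.univ.erase k, t l) (Finset.mem_univ j)
    _ = c := hev.symm

private lemma aux_iDW_open {s : Set ℂ} (hs : IsOpen s) {x : ℂ} (hx : x ∈ s) (n : ℕ)
    (f : ℂ → ℂ) : iteratedDerivWithin n f s x = iteratedDeriv n f x := by
  rw [iteratedDerivWithin_eq_iteratedFDerivWithin, iteratedDeriv_eq_iteratedFDeriv,
    iteratedFDerivWithin_of_isOpen n hs hx]

private lemma aux_coeff_vanish {p : ℕ} (b : Fin p → ℕ) (hb : ∀ j, 1 ≤ b j)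
    (z : Fin p → ℂ) (hz : Function.Injective z) (c : ℂ)
    (A : Fin p → Polynomial ℂ) (hA : ∀ j, (A j).degree < ((b j : ℕ) : WithBot ℕ))
    (hid : (Polynomial.C c : Polynomial ℂ) =
      ∑ k, A k * ∏ l ∈ Finset.univ.erase k, (X - Polynomial.C (z l)) ^ (b l))
    (j : Fin p)
    (hres : iteratedDeriv (b j - 1)
      (fun w : ℂ => c * ∏ k ∈ Finset.univ.erase j, (w - z k) ^ (-(b k : ℤ))) (z j) = 0) :
    (A j).coeff (b j - 1) = 0 := by
  classical
  set U : Set ℂ := ⋂ k ∈ Finset.univ.erase j, {z k}ᶜ with hU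
  have hUopen : IsOpen U := isOpen_biInter_finset fun k _ => isOpen_compl_singleton
  have hmemU : ∀ w : ℂ, w ∈ U ↔ ∀ k ∈ Finset.univ.erase j, w ≠ z k := by
    intro w
    simp [hU]
  have hzjU : z j ∈ U := by
    rw [hmemU]
    intro k hk
    exact fun h => (Finset.mem_erase.mp hk).1 (hz h.symm)
  set S : ℂ → ℂ := fun w => ∑ k ∈ Finset.univ.erase j, (A k).eval w * ((w - z k) ^ (b k))⁻¹
    with hSdef
  have hSan : AnalyticOnNhd ℂ S U := by
    intro w hw
    refine Finset.analyticAt_fun_sum _ fun k hk => ?_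
    have h1 : AnalyticAt ℂ (fun w : ℂ => (A k).eval w) w :=
      (AnalyticOnNhd.eval_polynomial (𝕜 := ℂ) (A k)) w (Set.mem_univ w)
    have h2 : AnalyticAt ℂ (fun w : ℂ => ((w - z k) ^ (b k))⁻¹) w := by
      refine AnalyticAt.inv ?_ ?_
      · exact (analyticAt_id.sub analyticAt_const).pow _
      · exact pow_ne_zero _ (sub_ne_zero.mpr ((hmemU w).mp hw k hk))
    exact h1.mul h2
  have hev : (fun w : ℂ => c * ∏ k ∈ Finset.univ.erase j, (w - z k) ^ (-(b k : ℤ)))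
      =ᶠ[𝓝 (z j)] fun w => (A j).eval w + (w - z j) ^ (b j) * S w := by
    filter_upwards [hUopen.mem_nhds hzjU] with w hw
    exact aux_erase_decomp b z A c hid j w ((hmemU w).mp hw)
  rw [hev.iteratedDeriv_eq] at hres
  -- split the iterated derivative of the sum
  have hUdiff : UniqueDiffOn ℂ U := hUopen.uniqueDiffOn
  have hCD1 : ContDiffOn ℂ (b j - 1 : ℕ) (fun w : ℂ => (A j).eval w) U := by
    refine AnalyticOnNhd.contDiffOn (fun w _ => ?_) hUdiff
    exact (AnalyticOnNhd.eval_polynomial (𝕜 := ℂ) (A j)) w (Set.mem_univ w)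
  have hCD2 : ContDiffOn ℂ (b j - 1 : ℕ) (fun w : ℂ => (w - z j) ^ (b j) * S w) U := by
    refine AnalyticOnNhd.contDiffOn (fun w hw => ?_) hUdiff
    exact ((analyticAt_id.sub analyticAt_const).pow _).mul (hSan w hw)
  have hsplit : iteratedDeriv (b j - 1) (fun w => (A j).eval w + (w - z j) ^ (b j) * S w) (z j)
      = iteratedDeriv (b j - 1) (fun w : ℂ => (A j).eval w) (z j)
        + iteratedDeriv (b j - 1) (fun w : ℂ => (w - z j) ^ (b j) * S w) (z j) := by
    have h1 := iteratedDerivWithin_add (𝕜 := ℂ) (F := ℂ) (n := b j - 1) hzjU hUdiff (hCD1 _ hzjU) (hCD2 _ hzjU)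
    rw [aux_iDW_open hUopen hzjU, aux_iDW_open hUopen hzjU, aux_iDW_open hUopen hzjU] at h1
    exact h1
  rw [hsplit] at hres
  have hzero : iteratedDeriv (b j - 1) (fun w : ℂ => (w - z j) ^ (b j) * S w) (z j) = 0 :=
    aux_iteratedDeriv_pow_mul hUopen hSan hzjU (by have := hb j; omega)
  have hNdeg : (A j).natDegree ≤ b j - 1 := by
    rcases eq_or_ne (A j) 0 with h0 | h0
    · simp [h0]
    · have := (Polynomial.natDegree_lt_iff_degree_lt h0).mpr (hA j)
      omega
  rw [hzero, add_zero, aux_iteratedDeriv_poly, aux_iterate_derivative_eval _ _ hNdeg] at hres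
  have hfac : ((b j - 1).factorial : ℂ) ≠ 0 := Nat.cast_ne_zero.mpr (Nat.factorial_ne_zero _)
  exact (mul_eq_zero.mp hres).resolve_left hfac

private lemma aux_antideriv (zc : ℂ) (m0 : ℕ) (A : Polynomial ℂ) (hA : A.natDegree < m0) :
    ∃ P : Polynomial ℂ, P.natDegree ≤ m0 - 1 ∧
      (X - Polynomial.C zc) * Polynomial.derivative P - Polynomial.C (m0 : ℂ) * P = A := by
  classical
  set P : Polynomial ℂ := ∑ m ∈ Finset.range m0,
    Polynomial.C ((Polynomial.taylor zc A).coeff m / ((m : ℂ) - (m0 : ℂ))) *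
      (X - Polynomial.C zc) ^ m with hPdef
  have hstep : ∀ m : ℕ, (X - Polynomial.C zc) * Polynomial.derivative ((X - Polynomial.C zc) ^ m)
      = Polynomial.C (m : ℂ) * (X - Polynomial.C zc) ^ m := by
    intro m
    cases m with
    | zero => simp
    | succ m =>
      rw [Polynomial.derivative_pow]
      simp only [Polynomial.derivative_sub, Polynomial.derivative_X, Polynomial.derivative_C,
        sub_zero, mul_one, Nat.add_sub_cancel]
      rw [mul_left_comm, ← pow_succ']
  refine ⟨P, ?_, ?_⟩
  · refine Polynomial.natDegree_sum_le_of_forall_le _ _ fun m hm => ?_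
    refine le_trans (Polynomial.natDegree_mul_le) ?_
    simp only [Polynomial.natDegree_C, zero_add]
    refine le_trans (Polynomial.natDegree_pow _ _).le ?_
    have : (Polynomial.X - Polynomial.C zc).natDegree = 1 := Polynomial.natDegree_X_sub_C zc
    rw [this, mul_one]
    exact Nat.le_sub_one_of_lt (Finset.mem_range.mp hm)
  · have key : (X - Polynomial.C zc) * Polynomial.derivative P - Polynomial.C (m0 : ℂ) * P
        = ∑ m ∈ Finset.range m0,
            Polynomial.C ((Polynomial.taylor zc A).coeff m) * (X - Polynomial.C zc) ^ m := by
      rw [hPdef, Polynomial.derivative_sum, Finset.mul_sum, Finset.mul_sum,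
        ← Finset.sum_sub_distrib]
      refine Finset.sum_congr rfl fun m hm => ?_
      have hmlt : m < m0 := Finset.mem_range.mp hm
      have hne : (m : ℂ) - (m0 : ℂ) ≠ 0 := sub_ne_zero.mpr (by exact_mod_cast hmlt.ne)
      rw [Polynomial.derivative_mul, Polynomial.derivative_C, zero_mul, zero_add]
      rw [mul_left_comm, hstep m, ← mul_assoc, ← Polynomial.C_mul, ← mul_assoc,
        ← Polynomial.C_mul, ← sub_mul, ← Polynomial.C_sub]
      congr 1
      congr 1
      field_simp
    rw [key]
    conv_rhs => rw [← Polynomial.sum_taylor_eq A zc]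
    rw [Polynomial.sum_over_range' _ (fun n => by simp) m0
      (by rw [Polynomial.natDegree_taylor]; exact hA)]

private lemma aux_final {p : ℕ} (hp : 2 ≤ p) (b : Fin p → ℕ) (hb2 : ∀ j, 2 ≤ b j)
    (z : Fin p → ℂ) (hz : Function.Injective z) (c : ℂ) (hc : c ≠ 0)
    (A : Fin p → Polynomial ℂ)
    (hA2 : ∀ j, (A j).degree < ((b j - 1 : ℕ) : WithBot ℕ))
    (hid : (Polynomial.C c : Polynomial ℂ) =
      ∑ k, A k * ∏ l ∈ Finset.univ.erase k, (X - Polynomial.C (z l)) ^ (b l)) :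
    False := by
  classical
  set m0 : Fin p → ℕ := fun j => b j - 1 with hm0
  have hm0pos : ∀ j, 1 ≤ m0 j := fun j => Nat.le_sub_one_of_lt (hb2 j)
  have hAnat : ∀ j, (A j).natDegree < m0 j := by
    intro j
    rcases eq_or_ne (A j) 0 with h0 | h0
    · simp only [h0, Polynomial.natDegree_zero]
      exact hm0pos j
    · exact (Polynomial.natDegree_lt_iff_degree_lt h0).mpr (hA2 j)
  choose P hPdeg hPode using fun j => aux_antideriv (z j) (m0 j) (A j) (hAnat j)
  set Qp : Fin p → Polynomial ℂ := fun j => (X - Polynomial.C (z j)) ^ (m0 j) with hQp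
  set Q : Polynomial ℂ := ∏ j, Qp j with hQ
  set Pt : Polynomial ℂ := ∑ j, P j * ∏ k ∈ Finset.univ.erase j, Qp k with hPt
  set W : Polynomial ℂ := Polynomial.derivative Pt * Q - Pt * Polynomial.derivative Q with hW
  set RHS : Polynomial ℂ := Polynomial.C c * ∏ j, (X - Polynomial.C (z j)) ^ (b j - 2) with hRHS
  -- step 1 : W = RHS
  have hroot : ∀ w : ℂ, (∀ j, w ≠ z j) → W.eval w = RHS.eval w := by
    intro w hw
    have hs : ∀ j, w - z j ≠ 0 := fun j => sub_ne_zero.mpr (hw j)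
    have ht : ∀ j : Fin p, (w - z j) ^ (b j) ≠ 0 := fun j => pow_ne_zero _ (hs j)
    have hQev : Q.eval w = ∏ j, (w - z j) ^ (m0 j) := by
      rw [hQ, Polynomial.eval_prod]
      exact Finset.prod_congr rfl fun j _ => by simp [hQp]
    have hQne : Q.eval w ≠ 0 := by
      rw [hQev]; exact Finset.prod_ne_zero_iff.mpr fun j _ => pow_ne_zero _ (hs j)
    have hHj : ∀ j, HasDerivAt (fun u : ℂ => (P j).eval u / ((u - z j) ^ (m0 j)))
        ((A j).eval w * ((w - z j) ^ (b j))⁻¹) w := by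
      intro j
      have hPda : HasDerivAt (fun u : ℂ => (P j).eval u) ((P j).derivative.eval w) w :=
        (P j).hasDerivAt w
      have hpow : HasDerivAt (fun u : ℂ => (u - z j) ^ (m0 j))
          ((m0 j : ℂ) * (w - z j) ^ (m0 j - 1)) w := by
        simpa using ((hasDerivAt_id w).sub_const (z j)).fun_pow (m0 j)
      have hdiv := hPda.fun_div hpow (pow_ne_zero _ (hs j))
      have hode : (w - z j) * (P j).derivative.eval w - (m0 j : ℂ) * (P j).eval w
          = (A j).eval w := by
        have h0 := congrArg (Polynomial.eval w) (hPode j)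
        simpa using h0
      refine hdiv.congr_deriv ?_
      symm
      obtain ⟨e, he⟩ : ∃ e, b j = e + 2 := ⟨b j - 2, by have := hb2 j; omega⟩
      have hm0e : m0 j = e + 1 := by show b j - 1 = e + 1; omega
      rw [hm0e] at hode
      rw [he, hm0e, ← hode]
      simp only [Nat.add_sub_cancel]
      have hse := hs j
      field_simp
      ring
    have hsum : HasDerivAt (fun u : ℂ => ∑ j, (P j).eval u / ((u - z j) ^ (m0 j)))
        (∑ j, (A j).eval w * ((w - z j) ^ (b j))⁻¹) w := HasDerivAt.fun_sum fun j _ => hHj j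
    have hval : (∑ j, (A j).eval w * ((w - z j) ^ (b j))⁻¹)
        = c * (∏ j, (w - z j) ^ (b j))⁻¹ := by
      refine aux_sum_div _ (fun j => (A j).eval w) ht c ?_
      have h0 := congrArg (Polynomial.eval w) hid
      simpa [Polynomial.eval_finset_sum, Polynomial.eval_prod] using h0
    set V : Set ℂ := ⋂ j, {z j}ᶜ with hV
    have hVopen : IsOpen V := isOpen_iInter_of_finite fun j => isOpen_compl_singleton
    have hwV : w ∈ V := Set.mem_iInter.mpr fun j => hw j
    have hfeq : (fun u : ℂ => ∑ j, (P j).eval u / ((u - z j) ^ (m0 j)))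
        =ᶠ[𝓝 w] fun u => Pt.eval u / Q.eval u := by
      filter_upwards [hVopen.mem_nhds hwV] with u hu
      have hu' : ∀ j, u - z j ≠ 0 := fun j => sub_ne_zero.mpr (Set.mem_iInter.mp hu j)
      have h1 : ∑ j, (P j).eval u * (((u - z j) ^ (m0 j)))⁻¹
          = Pt.eval u * ((∏ j, (u - z j) ^ (m0 j)))⁻¹ := by
        refine aux_sum_div _ _ (fun j => pow_ne_zero _ (hu' j)) _ ?_
        rw [hPt]
        simp [Polynomial.eval_finset_sum, Polynomial.eval_prod, hQp]
      have hQu : Q.eval u = ∏ j, (u - z j) ^ (m0 j) := by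
        rw [hQ, Polynomial.eval_prod]
        exact Finset.prod_congr rfl fun j _ => by simp [hQp]
      simp only [div_eq_mul_inv, hQu]
      exact h1
    have hdiv2 : HasDerivAt (fun u : ℂ => Pt.eval u / Q.eval u)
        (((Polynomial.derivative Pt).eval w * Q.eval w
          - Pt.eval w * (Polynomial.derivative Q).eval w) / (Q.eval w) ^ 2) w :=
      (Pt.hasDerivAt w).fun_div (Q.hasDerivAt w) hQne
    have hsum2 := hdiv2.congr_of_eventuallyEq hfeq
    have huniq := hsum.unique hsum2
    rw [hval] at huniq
    have hWev : W.eval w = c * (∏ j, (w - z j) ^ (b j))⁻¹ * (Q.eval w) ^ 2 := by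
      have h2 : ((Polynomial.derivative Pt).eval w * Q.eval w
          - Pt.eval w * (Polynomial.derivative Q).eval w)
          = c * (∏ j, (w - z j) ^ (b j))⁻¹ * (Q.eval w) ^ 2 := by
        rw [huniq]
        field_simp
      rw [hW]
      simp only [Polynomial.eval_sub, Polynomial.eval_mul]
      rw [h2]
    rw [hWev, hRHS]
    rw [Polynomial.eval_mul, Polynomial.eval_C, Polynomial.eval_prod, Polynomial.eval_prod]
    have hQev2 : (∏ j, Polynomial.eval w (Qp j)) = ∏ j, (w - z j) ^ m0 j :=
      Finset.prod_congr rfl fun j _ => by simp [hQp]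
    rw [hQev2, ← Finset.prod_pow, ← Finset.prod_inv_distrib, mul_assoc, ← Finset.prod_mul_distrib]
    refine congrArg (fun x => c * x) (Finset.prod_congr rfl fun j _ => ?_)
    obtain ⟨e, he⟩ : ∃ e, b j = e + 2 := ⟨b j - 2, by have := hb2 j; omega⟩
    have hm0e : m0 j = e + 1 := by show b j - 1 = e + 1; omega
    rw [he, hm0e]
    simp only [Polynomial.eval_pow, Polynomial.eval_sub, Polynomial.eval_X, Polynomial.eval_C,
      Nat.add_sub_cancel]
    have hse := hs j
    field_simp
    ring
  have hWRHS : W = RHS := by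
    refine eq_of_sub_eq_zero (Polynomial.eq_zero_of_infinite_isRoot _ ?_)
    refine ((Set.finite_range z).infinite_compl).mono ?_
    intro w hw
    have hww : ∀ j, w ≠ z j := fun j h => hw ⟨j, h.symm⟩
    simp only [Set.mem_setOf_eq, Polynomial.IsRoot.def, Polynomial.eval_sub]
    rw [hroot w hww, sub_self]
  -- step 2 : degree contradiction
  have hQpmonic : ∀ j, (Qp j).Monic := fun j => (monic_X_sub_C _).pow _
  have hQmonic : Q.Monic := monic_prod_of_monic _ _ fun j _ => hQpmonic j
  have hQpdeg : ∀ j, (Qp j).natDegree = m0 j := fun j => by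
    rw [hQp]; simp [Polynomial.natDegree_pow, Polynomial.natDegree_X_sub_C]
  set Sn : ℕ := ∑ j, (b j - 2) with hSn
  have hsum_m0 : ∑ j, m0 j = Sn + p := by
    have h1 : ∀ j ∈ (Finset.univ : Finset (Fin p)), m0 j = (b j - 2) + 1 := fun j _ => by
      show b j - 1 = (b j - 2) + 1
      have := hb2 j
      omega
    rw [Finset.sum_congr rfl h1, Finset.sum_add_distrib, hSn]
    simp [Finset.card_univ]
  have hQdeg : Q.natDegree = Sn + p := by
    rw [hQ, Polynomial.natDegree_prod _ _ (fun j _ => (hQpmonic j).ne_zero),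
      Finset.sum_congr rfl (fun j _ => hQpdeg j)]
    exact hsum_m0
  have hRHSne : RHS ≠ 0 := by
    rw [hRHS]
    exact mul_ne_zero (Polynomial.C_ne_zero.mpr hc)
      (Finset.prod_ne_zero_iff.mpr fun j _ => pow_ne_zero _ (Polynomial.X_sub_C_ne_zero (z j)))
  have hPtne : Pt ≠ 0 := by
    intro h0
    apply hRHSne
    rw [← hWRHS, hW, h0]
    simp
  have hPtdeg : Pt.natDegree ≤ Sn + p - 1 := by
    rw [hPt]
    refine Polynomial.natDegree_sum_le_of_forall_le _ _ fun j _ => ?_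
    refine le_trans Polynomial.natDegree_mul_le ?_
    have h1 : (∏ k ∈ Finset.univ.erase j, Qp k).natDegree ≤ ∑ k ∈ Finset.univ.erase j, m0 k := by
      refine le_trans (Polynomial.natDegree_prod_le _ _) ?_
      exact le_of_eq (Finset.sum_congr rfl fun k _ => hQpdeg k)
    have h2 : m0 j + ∑ k ∈ Finset.univ.erase j, m0 k = Sn + p := by
      rw [Finset.add_sum_erase _ _ (Finset.mem_univ j)]
      exact hsum_m0
    have h3 := hPdeg j
    have h4 := hm0pos j
    omega
  have hdq1 : 1 ≤ Q.natDegree := by omega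
  have hdplt : Pt.natDegree < Q.natDegree := by omega
  have hc2 : (Pt * Polynomial.derivative Q).coeff (Pt.natDegree + (Q.natDegree - 1))
      = Pt.leadingCoeff * (Q.natDegree : ℂ) := by
    rw [Polynomial.coeff_mul_add_eq_of_natDegree_le le_rfl (Polynomial.natDegree_derivative_le Q),
      Polynomial.coeff_derivative, show Q.natDegree - 1 + 1 = Q.natDegree by omega,
      hQmonic.coeff_natDegree, Polynomial.coeff_natDegree]
    push_cast [Nat.cast_sub hdq1]
    ring
  have hc1 : (Polynomial.derivative Pt * Q).coeff (Pt.natDegree + (Q.natDegree - 1))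
      = Pt.leadingCoeff * (Pt.natDegree : ℂ) := by
    rcases Nat.eq_zero_or_pos Pt.natDegree with h0 | h0
    · have hPtC : Polynomial.derivative Pt = 0 := by
        rw [Polynomial.eq_C_of_natDegree_eq_zero h0]
        exact Polynomial.derivative_C
      rw [hPtC, zero_mul, Polynomial.coeff_zero, h0, Nat.cast_zero, mul_zero]
    · obtain ⟨d, hd⟩ : ∃ d, Pt.natDegree = d + 1 := ⟨Pt.natDegree - 1, by omega⟩
      rw [show Pt.natDegree + (Q.natDegree - 1) = d + Q.natDegree by omega]
      rw [Polynomial.coeff_mul_add_eq_of_natDegree_le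
        (le_trans (Polynomial.natDegree_derivative_le Pt) (by omega)) le_rfl,
        Polynomial.coeff_derivative, hQmonic.coeff_natDegree, ← hd, Polynomial.coeff_natDegree]
      rw [hd]
      push_cast
      ring
  have hlc : Pt.leadingCoeff ≠ 0 := Polynomial.leadingCoeff_ne_zero.mpr hPtne
  have hWne : W.coeff (Pt.natDegree + (Q.natDegree - 1)) ≠ 0 := by
    rw [hW, Polynomial.coeff_sub, hc1, hc2, ← mul_sub]
    refine mul_ne_zero hlc (sub_ne_zero.mpr ?_)
    intro hcast
    exact hdplt.ne (Nat.cast_injective hcast)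
  have hRHSdeg : RHS.natDegree ≤ Sn := by
    rw [hRHS]
    refine le_trans Polynomial.natDegree_mul_le ?_
    rw [Polynomial.natDegree_C, zero_add]
    refine le_trans (Polynomial.natDegree_prod_le _ _) (le_of_eq ?_)
    rw [hSn]
    refine Finset.sum_congr rfl fun j _ => ?_
    rw [Polynomial.natDegree_pow, Polynomial.natDegree_X_sub_C, mul_one]
  have hNbig : Sn < Pt.natDegree + (Q.natDegree - 1) := by omega
  apply hWne
  rw [hWRHS]
  exact Polynomial.coeff_eq_zero_of_natDegree_lt (lt_of_le_of_lt hRHSdeg hNbig)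

end AuxIsoresidual

/-- The isoresidual fiber over the origin is empty: every meromorphic 1-form
`C·dw/∏ j (w - z j)^(b j)` with `C ≠ 0` and pairwise distinct poles has at least one
nonzero residue. -/
theorem isoresidual_fiber_at_origin_empty
    (p : ℕ) (hp : 2 ≤ p) (b : Fin p → ℕ) (hb : ∀ j, 1 ≤ b j)
    (C : ℂ) (hC : C ≠ 0) (z : Fin p → ℂ) (hz : Function.Injective z) :
    ¬ (∀ j, residueVec p b C z j = 0) := by
  classical
  intro h
  obtain ⟨A, hA, hid⟩ := aux_partial_fractions (by omega : 1 ≤ p) b hb z hz C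
  have hiter : ∀ j, iteratedDeriv (b j - 1)
      (fun w : ℂ => C * ∏ k ∈ Finset.univ.erase j, (w - z k) ^ (-(b k : ℤ))) (z j) = 0 := by
    intro j
    have h' := h j
    simp only [residueVec] at h'
    have hfac : (2 * (Real.pi : ℂ) * Complex.I / (((b j - 1).factorial : ℕ) : ℂ)) ≠ 0 := by
      apply div_ne_zero
      · exact mul_ne_zero (mul_ne_zero two_ne_zero
          (Complex.ofReal_ne_zero.mpr Real.pi_ne_zero)) Complex.I_ne_zero
      · exact_mod_cast Nat.factorial_ne_zero _
    exact (mul_eq_zero.mp h').resolve_left hfac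
  have coeffv : ∀ j, (A j).coeff (b j - 1) = 0 := fun j =>
    aux_coeff_vanish b hb z hz C A hA hid j (hiter j)
  have hA2 : ∀ j, (A j).degree < ((b j - 1 : ℕ) : WithBot ℕ) := by
    intro j
    rw [Polynomial.degree_lt_iff_coeff_zero]
    intro m hm
    rcases eq_or_lt_of_le hm with rfl | hlt
    · exact coeffv j
    · exact (Polynomial.degree_lt_iff_coeff_zero _ _).mp (hA j) m (by omega)
  by_cases hex : ∃ j, b j = 1
  · obtain ⟨j, hbj⟩ := hex
    have hAj0 : A j = 0 := by
      have h0 : (A j).degree < ((0 : ℕ) : WithBot ℕ) := by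
        have := hA2 j
        rw [hbj] at this
        simpa using this
      rw [Polynomial.degree_lt_iff_coeff_zero] at h0
      exact Polynomial.ext fun n => by rw [h0 n (Nat.zero_le n)]; simp
    have hevalj := congrArg (Polynomial.eval (z j)) hid
    simp only [Polynomial.eval_C, Polynomial.eval_finset_sum, Polynomial.eval_mul,
      Polynomial.eval_prod, Polynomial.eval_pow, Polynomial.eval_sub, Polynomial.eval_X]
        at hevalj
    apply hC
    rw [hevalj]
    refine Finset.sum_eq_zero fun k _ => ?_
    rcases eq_or_ne k j with rfl | hkj
    · rw [hAj0]
      simp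
    · have hjmem : j ∈ Finset.univ.erase k := Finset.mem_erase.mpr ⟨hkj.symm, Finset.mem_univ j⟩
      rw [Finset.prod_eq_zero hjmem (by rw [sub_self]; exact zero_pow (by omega)), mul_zero]
  · push_neg at hex
    have hb2 : ∀ j, 2 ≤ b j := fun j => by have h1 := hb j; have h2 := hex j; omega
    exact aux_final hp b hb2 z hz C hC A hA2 hid
end

section
/- Let g and h be permutations of a set X and let t ∈ X satisfy g(t) ≠ t and h(t) ≠ t, and suppose the supports of g and h meet only at t, i.e. there is no x ≠ t with both g(x) ≠ x and h(x) ≠ x. Then the three points t, g⁻¹(t), h⁻¹(t) are pairwise distinct, and the commutator [g, h] = g⁻¹ h⁻¹ g h is the 3-cycle sending t ↦ g⁻¹(t), g⁻¹(t) ↦ h⁻¹(t), h⁻¹(t) ↦ t and fixing every other point of X. -/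
private lemma perm_inv_apply_self {X : Type*} (f : Equiv.Perm X) (x : X) : f⁻¹ (f x) = x :=
  f.symm_apply_apply x

private lemma perm_apply_inv_self {X : Type*} (f : Equiv.Perm X) (x : X) : f (f⁻¹ x) = x :=
  f.apply_symm_apply x

private lemma perm_inv_fix {X : Type*} (f : Equiv.Perm X) (x : X) (hfx : f x = x) :
    f⁻¹ x = x := by
  nth_rewrite 1 [← hfx]
  exact perm_inv_apply_self f x

/-- If the supports of two permutations `g` and `h` meet only at a point `t` moved by
both, then `t`, `g⁻¹ t`, `h⁻¹ t` are pairwise distinct and the commutator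
`[g, h] = g⁻¹ h⁻¹ g h` is the 3-cycle `t ↦ g⁻¹ t ↦ h⁻¹ t ↦ t` fixing every other
point. -/
theorem commutator_is_three_cycle
    (X : Type*) [DecidableEq X] (g h : Equiv.Perm X) (t : X)
    (hg : g t ≠ t) (hh : h t ≠ t)
    (hmeet : ∀ x : X, x ≠ t → ¬(g x ≠ x ∧ h x ≠ x)) :
    (t ≠ g⁻¹ t ∧ t ≠ h⁻¹ t ∧ g⁻¹ t ≠ h⁻¹ t) ∧
    ∀ x : X, (g⁻¹ * h⁻¹ * g * h) x =
      if x = t then g⁻¹ t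
      else if x = g⁻¹ t then h⁻¹ t
      else if x = h⁻¹ t then t
      else x := by
  have hg1 : g⁻¹ t ≠ t := by
    intro e; apply hg; conv_lhs => rw [← e]
    simp
  have hh1 : h⁻¹ t ≠ t := by
    intro e; apply hh; conv_lhs => rw [← e]
    simp
  have hgh : g⁻¹ t ≠ h⁻¹ t := by
    intro e
    have e1 : g (h⁻¹ t) = t := by rw [← e, perm_apply_inv_self]
    refine hmeet (h⁻¹ t) hh1 ⟨?_, ?_⟩
    · rw [e1]; exact Ne.symm hh1
    · rw [perm_apply_inv_self]; exact Ne.symm hh1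
  have hfixh : h (g⁻¹ t) = g⁻¹ t := by
    by_contra hc
    refine hmeet (g⁻¹ t) hg1 ⟨?_, hc⟩
    rw [perm_apply_inv_self]; exact Ne.symm hg1
  have hfixg : g (h⁻¹ t) = h⁻¹ t := by
    by_contra hc
    refine hmeet (h⁻¹ t) hh1 ⟨hc, ?_⟩
    rw [perm_apply_inv_self]; exact Ne.symm hh1
  refine ⟨⟨Ne.symm hg1, Ne.symm hh1, hgh⟩, fun x => ?_⟩
  simp only [Equiv.Perm.mul_apply]
  by_cases hx1 : x = t
  · rw [hx1, if_pos rfl]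
    have hfixght : g (h t) = h t := by
      by_contra hc
      exact hmeet (h t) hh ⟨hc, fun e => hh (h.injective e)⟩
    rw [hfixght, perm_inv_apply_self]
  · rw [if_neg hx1]
    by_cases hx2 : x = g⁻¹ t
    · rw [hx2, if_pos rfl, hfixh, perm_apply_inv_self]
      exact perm_inv_fix g (h⁻¹ t) hfixg
    · rw [if_neg hx2]
      by_cases hx3 : x = h⁻¹ t
      · rw [hx3, if_pos rfl, perm_apply_inv_self]
        have hfixhgt : h (g t) = g t := by
          by_contra hc
          exact hmeet (g t) hg ⟨fun e => hg (g.injective e), hc⟩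
        rw [perm_inv_fix h (g t) hfixhgt, perm_inv_apply_self]
      · rw [if_neg hx3]
        by_cases hhx : h x = x
        · by_cases hgx : g x = x
          · rw [hhx, hgx, perm_inv_fix h x hhx]
            exact perm_inv_fix g x hgx
          · have hgxt : g x ≠ t := fun e =>
              hx2 (by rw [← e]; exact (perm_inv_apply_self g x).symm)
            have hfix2 : h (g x) = g x := by
              by_contra hc
              exact hmeet (g x) hgxt ⟨fun e => hgx (g.injective e), hc⟩
            rw [hhx, perm_inv_fix h (g x) hfix2, perm_inv_apply_self]
        · have hgx : g x = x := by
            by_contra hc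
            exact hmeet x hx1 ⟨hc, hhx⟩
          have hhxt : h x ≠ t := fun e =>
            hx3 (by rw [← e]; exact (perm_inv_apply_self h x).symm)
          have hfix2 : g (h x) = h x := by
            by_contra hc
            exact hmeet (h x) hhxt ⟨hc, fun e => hhx (h.injective e)⟩
          rw [hfix2, perm_inv_apply_self]
          exact perm_inv_fix g x hgx
end
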